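/- (Theorem on the strata-fixed-effects regression under strong exogeneity.) Let Assumption 2 hold and assume positivity. Then Δ_sfe = Σ_{a∈𝒜} ω_sfe(a)·(μ(1,a) − μ(0,a)), where the weights ω_sfe(a) = P(D=1|A=a)·P(D=0|A=a)·P(A=a) / Σ_{a'∈𝒜} P(D=1|A=a')·P(D=0|A=a')·P(A=a') satisfy Σ_{a∈𝒜} ω_sfe(a) = 1 and ω_sfe(a) ≥ 0 for all a∈𝒜. -/

import Mathlib

open MeasureTheory ProbabilityTheory BigOperators

noncomputable section

variable {Ω : Type} [MeasurableSpace Ω] {K : ℕ}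

/-- Expectation of a real-valued random variable. -/
def Exp (P : Measure Ω) (Z : Ω → ℝ) : ℝ := ∫ ω, Z ω ∂P

/-- Probability of an event, as a real number. -/
def Pr (P : Measure Ω) (s : Set Ω) : ℝ := (P s).toReal

/-- Conditional expectation given an event, defined as a ratio. -/
def CE (P : Measure Ω) (Z : Ω → ℝ) (s : Set Ω) : ℝ :=
  Exp P (fun ω => Z ω * s.indicator (fun _ => (1:ℝ)) ω) / Pr P s

/-- Covariance of two real-valued random variables. -/
def Cov (P : Measure Ω) (Z W : Ω → ℝ) : ℝ :=
  Exp P (fun ω => Z ω * W ω) - Exp P Z * Exp P W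

/-- The event {D = d, A = a}. -/
def evDA (D : Ω → ℕ) (A : Ω → Fin K → ℕ) (d : ℕ) (a : Fin K → ℕ) : Set Ω :=
  {ω | D ω = d ∧ A ω = a}

/-- The event {D = d}. -/
def evD (D : Ω → ℕ) (d : ℕ) : Set Ω := {ω | D ω = d}

/-- The event {A = a}. -/
def evA (A : Ω → Fin K → ℕ) (a : Fin K → ℕ) : Set Ω := {ω | A ω = a}

/-- π_d(a) = P(A = a | D = d). -/
def piP (P : Measure Ω) (D : Ω → ℕ) (A : Ω → Fin K → ℕ) (d : ℕ) (a : Fin K → ℕ) : ℝ :=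
  Pr P (evDA D A d a) / Pr P (evD D d)

/-- The observed outcome Y = Σ_{(d,a)} Y(d,a)·1{D=d, A=a}. -/
def Yobs (D : Ω → ℕ) (A : Ω → Fin K → ℕ) (𝒜 : Finset (Fin K → ℕ))
    (Ypot : ℕ → (Fin K → ℕ) → Ω → ℝ) : Ω → ℝ :=
  fun ω => ∑ d ∈ ({0, 1} : Finset ℕ), ∑ a ∈ 𝒜,
    Ypot d a ω * (if D ω = d ∧ A ω = a then (1:ℝ) else 0)

/-- μ(d,a) = E[Y(d,a)]. -/
def muP (P : Measure Ω) (Ypot : ℕ → (Fin K → ℕ) → Ω → ℝ) (d : ℕ) (a : Fin K → ℕ) : ℝ :=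
  Exp P (Ypot d a)

/-- The random vector (D, A) as a real-valued family indexed by Unit ⊕ Fin K. -/
def DAvec (D : Ω → ℕ) (A : Ω → Fin K → ℕ) : Unit ⊕ Fin K → Ω → ℝ :=
  Sum.elim (fun _ ω => (D ω : ℝ)) (fun j ω => (A ω j : ℝ))

/-- The (K+1)×(K+1) covariance matrix of (D, A). -/
def covDAmat (P : Measure Ω) (D : Ω → ℕ) (A : Ω → Fin K → ℕ) :
    Matrix (Unit ⊕ Fin K) (Unit ⊕ Fin K) ℝ :=
  Matrix.of fun i j => Cov P (DAvec D A i) (DAvec D A j)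

/-- The K×K covariance matrix Var(A). -/
def varAmat (P : Measure Ω) (A : Ω → Fin K → ℕ) : Matrix (Fin K) (Fin K) ℝ :=
  Matrix.of fun i j => Cov P (fun ω => (A ω i : ℝ)) (fun ω => (A ω j : ℝ))

/-- The row vector Cov(D, A). -/
def covDA (P : Measure Ω) (D : Ω → ℕ) (A : Ω → Fin K → ℕ) : Fin K → ℝ :=
  fun j => Cov P (fun ω => (D ω : ℝ)) (fun ω => (A ω j : ℝ))

/-- M = Cov(D,A) ⬝ Var(A)⁻¹. -/
def Mlong (P : Measure Ω) (D : Ω → ℕ) (A : Ω → Fin K → ℕ) : Fin K → ℝ :=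
  fun j => ∑ i, covDA P D A i * (varAmat P A)⁻¹ i j

/-- Var(D). -/
def varD (P : Measure Ω) (D : Ω → ℕ) : ℝ :=
  Cov P (fun ω => (D ω : ℝ)) (fun ω => (D ω : ℝ))

/-- denom = Var(D) − Cov(D,A)·Var(A)⁻¹·Cov(A,D). -/
def denomL (P : Measure Ω) (D : Ω → ℕ) (A : Ω → Fin K → ℕ) : ℝ :=
  varD P D - ∑ j, Mlong P D A j * covDA P D A j

/-- The long-regression weight ω_dce^l(a). -/
def wdceL (P : Measure Ω) (D : Ω → ℕ) (A : Ω → Fin K → ℕ) (a : Fin K → ℕ) : ℝ :=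
  piP P D A 1 a *
    (varD P D - Pr P (evD D 1) *
      ∑ j, Mlong P D A j * ((a j : ℝ) - Exp P (fun ω => (A ω j : ℝ)))) / denomL P D A

/-- The long-regression weight ω_ind^l(a). -/
def windL (P : Measure Ω) (D : Ω → ℕ) (A : Ω → Fin K → ℕ) (a : Fin K → ℕ) : ℝ :=
  (varD P D * (piP P D A 1 a - piP P D A 0 a) -
    Pr P (evA A a) * ∑ j, Mlong P D A j * ((a j : ℝ) - Exp P (fun ω => (A ω j : ℝ))))
  / denomL P D A

/-- The residual of the long regression of Y on (1, D, A). -/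
def residLong (D : Ω → ℕ) (A : Ω → Fin K → ℕ) (𝒜 : Finset (Fin K → ℕ))
    (Ypot : ℕ → (Fin K → ℕ) → Ω → ℝ) (Δ θ₀ : ℝ) (θ : Fin K → ℝ) : Ω → ℝ :=
  fun ω => Yobs D A 𝒜 Ypot ω - Δ * (D ω : ℝ) - θ₀ - ∑ j, θ j * (A ω j : ℝ)

/-- The random vector W = (A, A·D) as a real-valued family indexed by Fin K ⊕ Fin K. -/
def Wvec (D : Ω → ℕ) (A : Ω → Fin K → ℕ) : Fin K ⊕ Fin K → Ω → ℝ :=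
  Sum.elim (fun j ω => (A ω j : ℝ)) (fun j ω => (A ω j : ℝ) * (D ω : ℝ))

/-- The 2K×2K covariance matrix Var(W), W = (A, AD). -/
def varWmat (P : Measure Ω) (D : Ω → ℕ) (A : Ω → Fin K → ℕ) :
    Matrix (Fin K ⊕ Fin K) (Fin K ⊕ Fin K) ℝ :=
  Matrix.of fun u v => Cov P (Wvec D A u) (Wvec D A v)

/-- The row vector Cov(D, W). -/
def covDW (P : Measure Ω) (D : Ω → ℕ) (A : Ω → Fin K → ℕ) : Fin K ⊕ Fin K → ℝ :=
  fun u => Cov P (fun ω => (D ω : ℝ)) (Wvec D A u)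

/-- M = Cov(D,W) ⬝ Var(W)⁻¹ for the interaction regression. -/
def Minter (P : Measure Ω) (D : Ω → ℕ) (A : Ω → Fin K → ℕ) : Fin K ⊕ Fin K → ℝ :=
  fun v => ∑ u, covDW P D A u * (varWmat P D A)⁻¹ u v

/-- denom = Var(D) − M·Cov(W,D) for the interaction regression. -/
def denomI (P : Measure Ω) (D : Ω → ℕ) (A : Ω → Fin K → ℕ) : ℝ :=
  varD P D - ∑ v, Minter P D A v * covDW P D A v

/-- E[A_j | D = 1]. -/
def condA1 (P : Measure Ω) (D : Ω → ℕ) (A : Ω → Fin K → ℕ) (j : Fin K) : ℝ :=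
  CE P (fun ω => (A ω j : ℝ)) (evD D 1)

/-- The random vector (D, A, AD) as a real-valued family. -/
def DADvec (D : Ω → ℕ) (A : Ω → Fin K → ℕ) : Unit ⊕ (Fin K ⊕ Fin K) → Ω → ℝ :=
  Sum.elim (fun _ ω => (D ω : ℝ)) (Wvec D A)

/-- The (2K+1)×(2K+1) covariance matrix of (D, A, AD). -/
def covDADmat (P : Measure Ω) (D : Ω → ℕ) (A : Ω → Fin K → ℕ) :
    Matrix (Unit ⊕ (Fin K ⊕ Fin K)) (Unit ⊕ (Fin K ⊕ Fin K)) ℝ :=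
  Matrix.of fun i j => Cov P (DADvec D A i) (DADvec D A j)

/-- The interaction-regression weight ω_dce^i(a). -/
def wdceI (P : Measure Ω) (D : Ω → ℕ) (A : Ω → Fin K → ℕ) (a : Fin K → ℕ) : ℝ :=
  piP P D A 1 a *
    (varD P D
      - Pr P (evD D 1) *
          ∑ j, Minter P D A (Sum.inl j) * ((a j : ℝ) - Exp P (fun ω => (A ω j : ℝ)))
      - Pr P (evD D 1) *
          ∑ j, Minter P D A (Sum.inr j) * ((a j : ℝ) - Pr P (evD D 1) * condA1 P D A j))
  / denomI P D A

/-- The interaction-regression weight ω_ind^i(a). -/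
def windI (P : Measure Ω) (D : Ω → ℕ) (A : Ω → Fin K → ℕ) (a : Fin K → ℕ) : ℝ :=
  (varD P D * (piP P D A 1 a - piP P D A 0 a)
    - ∑ j, Minter P D A (Sum.inl j) * Pr P (evA A a) * ((a j : ℝ) - Exp P (fun ω => (A ω j : ℝ)))
    - Pr P (evD D 1) *
        ∑ j, Minter P D A (Sum.inr j) *
          (piP P D A 1 a * (a j : ℝ) - Pr P (evA A a) * condA1 P D A j))
  / denomI P D A

/-- The residual of the interaction regression of Y on (1, D, A, AD). -/
def residInter (D : Ω → ℕ) (A : Ω → Fin K → ℕ) (𝒜 : Finset (Fin K → ℕ))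
    (Ypot : ℕ → (Fin K → ℕ) → Ω → ℝ) (Δ θ₀ : ℝ) (θ lam : Fin K → ℝ) : Ω → ℝ :=
  fun ω => Yobs D A 𝒜 Ypot ω - Δ * (D ω : ℝ) - θ₀ - (∑ j, θ j * (A ω j : ℝ))
    - ∑ j, lam j * (A ω j : ℝ) * (D ω : ℝ)

/-- P(D = d | A = a). -/
def condDgivenA (P : Measure Ω) (D : Ω → ℕ) (A : Ω → Fin K → ℕ) (d : ℕ) (a : Fin K → ℕ) : ℝ :=
  Pr P (evDA D A d a) / Pr P (evA A a)

/-- The SFE weight ω_sfe(a). -/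
def wsfe (P : Measure Ω) (D : Ω → ℕ) (A : Ω → Fin K → ℕ) (𝒜 : Finset (Fin K → ℕ))
    (a : Fin K → ℕ) : ℝ :=
  condDgivenA P D A 1 a * condDgivenA P D A 0 a * Pr P (evA A a) /
    ∑ a' ∈ 𝒜, condDgivenA P D A 1 a' * condDgivenA P D A 0 a' * Pr P (evA A a')

/-- The residual of the SFE regression of Y on (D, {1{A=a}}). -/
def residSFE (D : Ω → ℕ) (A : Ω → Fin K → ℕ) (𝒜 : Finset (Fin K → ℕ))
    (Ypot : ℕ → (Fin K → ℕ) → Ω → ℝ) (Δ : ℝ) (θ : (Fin K → ℕ) → ℝ) : Ω → ℝ :=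
  fun ω => Yobs D A 𝒜 Ypot ω - Δ * (D ω : ℝ) -
    ∑ a ∈ 𝒜, θ a * (if A ω = a then (1:ℝ) else 0)

/-- The residual of the saturated regression of Y on ({1{A=a}}, {D·1{A=a}}). -/
def residSAT (D : Ω → ℕ) (A : Ω → Fin K → ℕ) (𝒜 : Finset (Fin K → ℕ))
    (Ypot : ℕ → (Fin K → ℕ) → Ω → ℝ) (γ Δsat : (Fin K → ℕ) → ℝ) : Ω → ℝ :=
  fun ω => Yobs D A 𝒜 Ypot ω - (∑ a ∈ 𝒜, γ a * (if A ω = a then (1:ℝ) else 0)) -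
    ∑ a ∈ 𝒜, Δsat a * (D ω : ℝ) * (if A ω = a then (1:ℝ) else 0)

/-!
Under strong exogeneity, E[Y(d,a)·1{D=d, A=a}] = μ(d,a)·p_d(a) with p_d(a) = P(D=d, A=a), so the
normal equations of the regression become linear equations in the cell probabilities. The one
for 1{A=a} makes θ(a) the p-weighted mean of μ(0,a) and μ(1,a) − Δ; substituting this into the
one for D leaves Σ_a p₁(a)p₀(a)/(p₀(a)+p₁(a))·(μ(1,a) − μ(0,a) − Δ) = 0, and
p₁p₀/(p₀+p₁) = P(D=1|A=a)·P(D=0|A=a)·P(A=a) is the numerator of ω_sfe(a).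
-/

section General

variable {Ω β : Type*} [MeasurableSpace Ω] [MeasurableSpace β] {P : Measure Ω}

lemma ProbabilityTheory.IndepFun.setIntegral_preimage_sub_const [IsProbabilityMeasure P]
    {X : Ω → β} {Y : Ω → ℝ} (hXY : IndepFun X Y P) (hX : Measurable X) (hY : Integrable Y P)
    {s : Set β} (hs : MeasurableSet s) (c : ℝ) :
    ∫ ω in X ⁻¹' s, (Y ω - c) ∂P = P.real (X ⁻¹' s) * (∫ ω, Y ω ∂P - c) := by
  rw [(IndepFun_iff_Indep X Y P).1 hXY |>.setIntegral_eq_mul (f := fun y => y - c)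
    hX.comap_le hY.aemeasurable ⟨s, hs, rfl⟩ (by fun_prop), integral_sub hY (integrable_const c),
    integral_const, probReal_univ, one_smul]

lemma eq_sum_div_mul_of_sum_mul_sub_eq_zero {ι : Type*} {s : Finset ι} {t x : ι → ℝ} {c : ℝ}
    (ht : ∑ i ∈ s, t i ≠ 0) (h : ∑ i ∈ s, t i * (x i - c) = 0) :
    c = ∑ i ∈ s, t i / (∑ j ∈ s, t j) * x i := by
  simp only [div_mul_eq_mul_div, ← Finset.sum_div, eq_div_iff ht]
  simp only [mul_sub, Finset.sum_sub_distrib, ← Finset.sum_mul] at h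
  linarith

lemma treated_moment_eq_of_stratum_moment {p₀ p₁ μ₀ μ₁ Δ θ : ℝ} (hp : p₀ + p₁ ≠ 0)
    (h : p₀ * (μ₀ - θ) + p₁ * (μ₁ - (Δ + θ)) = 0) :
    p₁ * (μ₁ - (Δ + θ)) = p₁ * p₀ / (p₀ + p₁) * (μ₁ - μ₀ - Δ) := by
  field_simp
  linear_combination p₁ * h

end General

section SFE

variable {Ω : Type} {K : ℕ} {D : Ω → ℕ} {A : Ω → Fin K → ℕ} {𝒜 : Finset (Fin K → ℕ)}
  {Ypot : ℕ → (Fin K → ℕ) → Ω → ℝ}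

lemma evDA_eq_preimage (D : Ω → ℕ) (A : Ω → Fin K → ℕ) (d : ℕ) (a : Fin K → ℕ) :
    evDA D A d a = (fun ω => (D ω, A ω)) ⁻¹' {(d, a)} := by
  ext ω
  simp [evDA]

lemma Yobs_apply (hDbin : ∀ ω, D ω = 0 ∨ D ω = 1) (hAsupp : ∀ ω, A ω ∈ 𝒜) (ω : Ω) :
    Yobs D A 𝒜 Ypot ω = Ypot (D ω) (A ω) ω := by
  rcases hDbin ω with hd | hd <;> simp [Yobs, hd, hAsupp ω]

lemma residSFE_apply (hDbin : ∀ ω, D ω = 0 ∨ D ω = 1) (hAsupp : ∀ ω, A ω ∈ 𝒜)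
    (Δ : ℝ) (θ : (Fin K → ℕ) → ℝ) (ω : Ω) :
    residSFE D A 𝒜 Ypot Δ θ ω = Ypot (D ω) (A ω) ω - Δ * D ω - θ (A ω) := by
  simp [residSFE, Yobs_apply hDbin hAsupp, hAsupp ω]

lemma residSFE_mul_ite_eq (hDbin : ∀ ω, D ω = 0 ∨ D ω = 1) (hAsupp : ∀ ω, A ω ∈ 𝒜)
    (Δ : ℝ) (θ : (Fin K → ℕ) → ℝ) (a : Fin K → ℕ) :
    (fun ω => residSFE D A 𝒜 Ypot Δ θ ω * (if A ω = a then (1:ℝ) else 0))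
      = fun ω => (evDA D A 0 a).indicator (fun ω => Ypot 0 a ω - θ a) ω
          + (evDA D A 1 a).indicator (fun ω => Ypot 1 a ω - (Δ + θ a)) ω := by
  funext ω
  rw [residSFE_apply hDbin hAsupp]
  by_cases h : A ω = a
  · rcases hDbin ω with hd | hd <;> simp [evDA, hd, h, sub_sub]
  · simp [evDA, h]

lemma residSFE_mul_D_eq (hDbin : ∀ ω, D ω = 0 ∨ D ω = 1) (hAsupp : ∀ ω, A ω ∈ 𝒜)
    (Δ : ℝ) (θ : (Fin K → ℕ) → ℝ) :
    (fun ω => residSFE D A 𝒜 Ypot Δ θ ω * (D ω : ℝ))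
      = fun ω => ∑ a ∈ 𝒜, (evDA D A 1 a).indicator (fun ω => Ypot 1 a ω - (Δ + θ a)) ω := by
  funext ω
  rw [residSFE_apply hDbin hAsupp, Finset.sum_eq_single_of_mem (A ω) (hAsupp ω)]
  · rcases hDbin ω with hd | hd <;> simp [evDA, hd, sub_sub]
  · intro b _ hb
    simp [evDA, Ne.symm hb]

variable [MeasurableSpace Ω]

lemma measurableSet_evDA (hD : Measurable D) (hA : Measurable A) (d : ℕ) (a : Fin K → ℕ) :
    MeasurableSet (evDA D A d a) :=
  (hD (measurableSet_singleton d)).inter (hA (measurableSet_singleton a))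

lemma Pr_evA_eq_add (P : Measure Ω) [IsFiniteMeasure P] (hD : Measurable D) (hA : Measurable A)
    (hDbin : ∀ ω, D ω = 0 ∨ D ω = 1) (a : Fin K → ℕ) :
    Pr P (evA A a) = Pr P (evDA D A 0 a) + Pr P (evDA D A 1 a) := by
  have hsplit : evA A a = evDA D A 0 a ∪ evDA D A 1 a := by
    ext ω
    rcases hDbin ω with hd | hd <;> simp [evA, evDA, hd]
  have hdisj : Disjoint (evDA D A 0 a) (evDA D A 1 a) :=
    Set.disjoint_left.2 fun ω h0 h1 => by simp_all [evDA]
  simp only [Pr, ← measureReal_def, hsplit]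
  exact measureReal_union hdisj (measurableSet_evDA hD hA 1 a)

lemma condDgivenA_mul_condDgivenA_mul_Pr (P : Measure Ω) [IsFiniteMeasure P]
    (hD : Measurable D) (hA : Measurable A) (hDbin : ∀ ω, D ω = 0 ∨ D ω = 1) (a : Fin K → ℕ)
    (hne : Pr P (evDA D A 0 a) + Pr P (evDA D A 1 a) ≠ 0) :
    condDgivenA P D A 1 a * condDgivenA P D A 0 a * Pr P (evA A a)
      = Pr P (evDA D A 1 a) * Pr P (evDA D A 0 a)
        / (Pr P (evDA D A 0 a) + Pr P (evDA D A 1 a)) := by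
  rw [condDgivenA, condDgivenA, Pr_evA_eq_add P hD hA hDbin a]
  field_simp

lemma integrable_indicator_evDA_sub (P : Measure Ω) [IsFiniteMeasure P]
    (hD : Measurable D) (hA : Measurable A) {Y : Ω → ℝ} (hY : Integrable Y P)
    (d : ℕ) (a : Fin K → ℕ) (c : ℝ) :
    Integrable ((evDA D A d a).indicator fun ω => Y ω - c) P :=
  (hY.sub (integrable_const c)).indicator (measurableSet_evDA hD hA d a)

lemma integral_indicator_evDA_sub (P : Measure Ω) [IsProbabilityMeasure P]
    (hD : Measurable D) (hA : Measurable A) {Y : Ω → ℝ} (hY : Integrable Y P)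
    (hind : IndepFun (fun ω => (D ω, A ω)) Y P) (d : ℕ) (a : Fin K → ℕ) (c : ℝ) :
    ∫ ω, (evDA D A d a).indicator (fun ω => Y ω - c) ω ∂P
      = Pr P (evDA D A d a) * (Exp P Y - c) := by
  rw [integral_indicator (measurableSet_evDA hD hA d a), evDA_eq_preimage,
    hind.setIntegral_preimage_sub_const (hD.prodMk hA) hY (measurableSet_singleton _)]
  rfl

lemma Exp_residSFE_mul_ite (P : Measure Ω) [IsProbabilityMeasure P]
    (hD : Measurable D) (hA : Measurable A)
    (hDbin : ∀ ω, D ω = 0 ∨ D ω = 1) (hAsupp : ∀ ω, A ω ∈ 𝒜)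
    (hInt : ∀ d ∈ ({0, 1} : Finset ℕ), ∀ a ∈ 𝒜, Integrable (Ypot d a) P)
    (hIndep : ∀ d ∈ ({0, 1} : Finset ℕ), ∀ a ∈ 𝒜,
      IndepFun (fun ω => (D ω, A ω)) (Ypot d a) P)
    (Δ : ℝ) (θ : (Fin K → ℕ) → ℝ) {a : Fin K → ℕ} (ha : a ∈ 𝒜) :
    Exp P (fun ω => residSFE D A 𝒜 Ypot Δ θ ω * (if A ω = a then (1:ℝ) else 0))
      = Pr P (evDA D A 0 a) * (muP P Ypot 0 a - θ a)
        + Pr P (evDA D A 1 a) * (muP P Ypot 1 a - (Δ + θ a)) := by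
  have h0 : (0 : ℕ) ∈ ({0, 1} : Finset ℕ) := by simp
  have h1 : (1 : ℕ) ∈ ({0, 1} : Finset ℕ) := by simp
  rw [Exp, residSFE_mul_ite_eq hDbin hAsupp,
    integral_add (integrable_indicator_evDA_sub P hD hA (hInt 0 h0 a ha) 0 a _)
      (integrable_indicator_evDA_sub P hD hA (hInt 1 h1 a ha) 1 a _),
    integral_indicator_evDA_sub P hD hA (hInt 0 h0 a ha) (hIndep 0 h0 a ha),
    integral_indicator_evDA_sub P hD hA (hInt 1 h1 a ha) (hIndep 1 h1 a ha)]
  rfl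

lemma Exp_residSFE_mul_D (P : Measure Ω) [IsProbabilityMeasure P]
    (hD : Measurable D) (hA : Measurable A)
    (hDbin : ∀ ω, D ω = 0 ∨ D ω = 1) (hAsupp : ∀ ω, A ω ∈ 𝒜)
    (hInt : ∀ d ∈ ({0, 1} : Finset ℕ), ∀ a ∈ 𝒜, Integrable (Ypot d a) P)
    (hIndep : ∀ d ∈ ({0, 1} : Finset ℕ), ∀ a ∈ 𝒜,
      IndepFun (fun ω => (D ω, A ω)) (Ypot d a) P)
    (Δ : ℝ) (θ : (Fin K → ℕ) → ℝ) :
    Exp P (fun ω => residSFE D A 𝒜 Ypot Δ θ ω * (D ω : ℝ))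
      = ∑ a ∈ 𝒜, Pr P (evDA D A 1 a) * (muP P Ypot 1 a - (Δ + θ a)) := by
  have h1 : (1 : ℕ) ∈ ({0, 1} : Finset ℕ) := by simp
  rw [Exp, residSFE_mul_D_eq hDbin hAsupp, integral_finsetSum _ fun a ha =>
    integrable_indicator_evDA_sub P hD hA (hInt 1 h1 a ha) 1 a _]
  exact Finset.sum_congr rfl fun a ha =>
    integral_indicator_evDA_sub P hD hA (hInt 1 h1 a ha) (hIndep 1 h1 a ha) 1 a _

end SFE

theorem sfe_regression_under_strong_exogeneity_general
    (P : Measure Ω) [IsProbabilityMeasure P]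
    (D : Ω → ℕ) (A : Ω → Fin K → ℕ) (𝒜 : Finset (Fin K → ℕ))
    (Ypot : ℕ → (Fin K → ℕ) → Ω → ℝ)
    (hD : Measurable D) (hA : Measurable A)
    (hDbin : ∀ ω, D ω = 0 ∨ D ω = 1)
    (hAsupp : ∀ ω, A ω ∈ 𝒜)
    (hInt : ∀ d ∈ ({0, 1} : Finset ℕ), ∀ a ∈ 𝒜, Integrable (Ypot d a) P)
    (hpos : ∀ d ∈ ({0, 1} : Finset ℕ), ∀ a ∈ 𝒜, 0 < Pr P (evDA D A d a))
    (hIndep : ∀ d ∈ ({0, 1} : Finset ℕ), ∀ a ∈ 𝒜,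
      IndepFun (fun ω => (D ω, A ω)) (Ypot d a) P)
    (Δsfe : ℝ) (θ : (Fin K → ℕ) → ℝ)
    (hO1 : Exp P (fun ω => residSFE D A 𝒜 Ypot Δsfe θ ω * (D ω : ℝ)) = 0)
    (hO2 : ∀ a ∈ 𝒜,
      Exp P (fun ω => residSFE D A 𝒜 Ypot Δsfe θ ω * (if A ω = a then (1:ℝ) else 0)) = 0)
    :
    Δsfe = (∑ a ∈ 𝒜, wsfe P D A 𝒜 a * (muP P Ypot 1 a - muP P Ypot 0 a))
    ∧ (∑ a ∈ 𝒜, wsfe P D A 𝒜 a) = 1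
    ∧ ∀ a ∈ 𝒜, 0 ≤ wsfe P D A 𝒜 a := by
  have h0 : (0 : ℕ) ∈ ({0, 1} : Finset ℕ) := by simp
  have h1 : (1 : ℕ) ∈ ({0, 1} : Finset ℕ) := by simp
  have hcell : ∀ a ∈ 𝒜, Pr P (evDA D A 0 a) + Pr P (evDA D A 1 a) ≠ 0 := fun a ha =>
    (add_pos (hpos 0 h0 a ha) (hpos 1 h1 a ha)).ne'
  set n : (Fin K → ℕ) → ℝ := fun a =>
    condDgivenA P D A 1 a * condDgivenA P D A 0 a * Pr P (evA A a)
  have hn : ∀ a ∈ 𝒜, n a = Pr P (evDA D A 1 a) * Pr P (evDA D A 0 a)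
      / (Pr P (evDA D A 0 a) + Pr P (evDA D A 1 a)) := fun a ha =>
    condDgivenA_mul_condDgivenA_mul_Pr P hD hA hDbin a (hcell a ha)
  have hn_pos : ∀ a ∈ 𝒜, 0 < n a := fun a ha => by
    have := hpos 0 h0 a ha
    have := hpos 1 h1 a ha
    rw [hn a ha]
    positivity
  have hstratum : ∀ a ∈ 𝒜, Pr P (evDA D A 0 a) * (muP P Ypot 0 a - θ a)
      + Pr P (evDA D A 1 a) * (muP P Ypot 1 a - (Δsfe + θ a)) = 0 := fun a ha =>
    (Exp_residSFE_mul_ite P hD hA hDbin hAsupp hInt hIndep Δsfe θ ha).symm.trans (hO2 a ha)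
  have hmoment : ∑ a ∈ 𝒜, n a * (muP P Ypot 1 a - muP P Ypot 0 a - Δsfe) = 0 := by
    rw [← hO1, Exp_residSFE_mul_D P hD hA hDbin hAsupp hInt hIndep]
    refine Finset.sum_congr rfl fun a ha => ?_
    rw [hn a ha, treated_moment_eq_of_stratum_moment (hcell a ha) (hstratum a ha)]
  have hN : 0 < ∑ a ∈ 𝒜, n a := by
    obtain ⟨ω⟩ := nonempty_of_isProbabilityMeasure P
    exact Finset.sum_pos hn_pos ⟨A ω, hAsupp ω⟩
  exact ⟨eq_sum_div_mul_of_sum_mul_sub_eq_zero hN.ne' hmoment,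
    (Finset.sum_div _ _ _).symm.trans (div_self hN.ne'),
    fun a ha => div_nonneg (hn_pos a ha).le hN.le⟩

/-- Theorem on the strata-fixed-effects regression under strong exogeneity:
Δ_sfe = Σ_a ω_sfe(a)·(μ(1,a) − μ(0,a)), with nonnegative weights summing to one. -/
theorem sfe_regression_under_strong_exogeneity
    (P : Measure Ω) [IsProbabilityMeasure P]
    (D : Ω → ℕ) (A : Ω → Fin K → ℕ) (𝒜 : Finset (Fin K → ℕ))
    (Ypot : ℕ → (Fin K → ℕ) → Ω → ℝ)
    (hD : Measurable D) (hA : Measurable A)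
    (hDbin : ∀ ω, D ω = 0 ∨ D ω = 1)
    (hAsupp : ∀ ω, A ω ∈ 𝒜) (h𝒜0 : (0 : Fin K → ℕ) ∈ 𝒜)
    (hInt : ∀ d ∈ ({0, 1} : Finset ℕ), ∀ a ∈ 𝒜, Integrable (Ypot d a) P)
    (hpos : ∀ d ∈ ({0, 1} : Finset ℕ), ∀ a ∈ 𝒜, 0 < Pr P (evDA D A d a))
    (hIndep : ∀ d ∈ ({0, 1} : Finset ℕ), ∀ a ∈ 𝒜,
      IndepFun (fun ω => (D ω, A ω)) (Ypot d a) P)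
    (Δsfe : ℝ) (θ : (Fin K → ℕ) → ℝ)
    (hO1 : Exp P (fun ω => residSFE D A 𝒜 Ypot Δsfe θ ω * (D ω : ℝ)) = 0)
    (hO2 : ∀ a ∈ 𝒜,
      Exp P (fun ω => residSFE D A 𝒜 Ypot Δsfe θ ω * (if A ω = a then (1:ℝ) else 0)) = 0)
    :
    Δsfe = (∑ a ∈ 𝒜, wsfe P D A 𝒜 a * (muP P Ypot 1 a - muP P Ypot 0 a))
    ∧ (∑ a ∈ 𝒜, wsfe P D A 𝒜 a) = 1
    ∧ ∀ a ∈ 𝒜, 0 ≤ wsfe P D A 𝒜 a :=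
  sfe_regression_under_strong_exogeneity_general P D A 𝒜 Ypot hD hA hDbin hAsupp hInt hpos hIndep
    Δsfe θ hO1 hO2
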